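/- arXiv:1505.07581 — 2 statements merged into one kernel-verified Lean document; each statement's English description precedes it below -/
import Mathlib

section
/- Let P and Q be finite posets. (a) Every minimal prime ideal of L(P,Q) has height at least |Q|, and there exists a minimal prime of L(P,Q) of height exactly |Q|. (b) For an order-preserving map ψ : Q → P, the prime ideal 𝔭_ψ = (x_{ψ(q),q} : q ∈ Q) is a minimal prime of L(P,Q) if and only if for every order-preserving map φ : P → Q the composite map ψ∘φ : P → P has a fixed point. In particular, height(L(P,Q)) = |Q| and dim K[P,Q] = |Q|·(|P|−1). -/
open MvPolynomial

set_option maxHeartbeats 1000000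
set_option synthInstance.maxHeartbeats 1000000

noncomputable section

attribute [local instance] Classical.propDecidable

/-! ### Poset notions -/

/-- The comparability graph of a poset; it has the same connected components as
the Hasse diagram of a finite poset. -/
def compGraph (P : Type) [PartialOrder P] : SimpleGraph P where
  Adj p q := p ≠ q ∧ (p ≤ q ∨ q ≤ p)
  symm := ⟨fun _ _ h => ⟨h.1.symm, h.2.symm⟩⟩
  loopless := ⟨fun _ h => h.1 rfl⟩

/-- A poset is connected if its Hasse diagram is connected as a graph. -/
def PosetConnected (P : Type) [PartialOrder P] : Prop := (compGraph P).Connected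

/-- The number of connected components of a poset. -/
def numComponents (P : Type) [PartialOrder P] : ℕ :=
  Nat.card (compGraph P).ConnectedComponent

/-- The underlying set of a connected component of a poset. -/
def ccSet {P : Type} [PartialOrder P] (c : (compGraph P).ConnectedComponent) : Set P :=
  {p | (compGraph P).connectedComponentMk p = c}

/-- A poset is a chain if it is totally ordered. -/
def IsChainPoset (P : Type) [PartialOrder P] : Prop := ∀ a b : P, a ≤ b ∨ b ≤ a

/-- A poset is an antichain if its elements are pairwise incomparable. -/
def IsAntichainPoset (P : Type) [PartialOrder P] : Prop :=
  IsAntichain (· ≤ ·) (Set.univ : Set P)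

/-- A poset is rooted if no two incomparable elements have a common upper bound. -/
def IsRooted (P : Type) [PartialOrder P] : Prop :=
  ∀ p₁ p₂ p : P, ¬ p₁ ≤ p₂ → ¬ p₂ ≤ p₁ → ¬ (p₁ < p ∧ p₂ < p)

/-- A poset is co-rooted if no two incomparable elements have a common lower bound. -/
def IsCorooted (P : Type) [PartialOrder P] : Prop :=
  ∀ p₁ p₂ p : P, ¬ p₁ ≤ p₂ → ¬ p₂ ≤ p₁ → ¬ (p < p₁ ∧ p < p₂)

/-- A poset is a disjoint union of chains iff any two elements in the same connected
component are comparable. -/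
def IsDisjointUnionOfChains (P : Type) [PartialOrder P] : Prop :=
  ∀ p q : P, (compGraph P).Reachable p q → (p ≤ q ∨ q ≤ p)

/-- `𝔞(P)`: the maximal cardinality of an antichain in `P`. -/
def maxAntichainCard (P : Type) [PartialOrder P] : ℕ :=
  sSup {n | ∃ A : Finset P, IsAntichain (· ≤ ·) (A : Set P) ∧ A.card = n}

/-- The number of antichains of cardinality `k` in `P`. -/
def antichainCount (P : Type) [PartialOrder P] (k : ℕ) : ℕ :=
  Nat.card {A : Finset P // IsAntichain (· ≤ ·) (A : Set P) ∧ A.card = k}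

/-- The number of maximal elements of `P`. -/
def maxElemCount (P : Type) [PartialOrder P] : ℕ := Nat.card {p : P // ∀ q, ¬ p < q}

/-- The number of minimal elements of `P`. -/
def minElemCount (P : Type) [PartialOrder P] : ℕ := Nat.card {p : P // ∀ q, ¬ q < p}

def HasUniqueMinimal (P : Type) [PartialOrder P] : Prop := ∃! p : P, ∀ q, ¬ q < p
def HasUniqueMaximal (P : Type) [PartialOrder P] : Prop := ∃! p : P, ∀ q, ¬ p < q

/-! ### The ideals `L(P,Q)` -/

/-- The ideal `L(P,Q)` generated by the monomials `u_φ = ∏_p x_{p,φ(p)}`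
for order-preserving maps `φ : P → Q`. -/
def LPQ (K : Type) [Field K] (P Q : Type) [PartialOrder P] [PartialOrder Q] [Fintype P] :
    Ideal (MvPolynomial (P × Q) K) :=
  Ideal.span (Set.range fun φ : P →o Q => ∏ p : P, (X (p, φ p) : MvPolynomial (P × Q) K))

/-- `L(A,B)` for subposets `A ⊆ P`, `B ⊆ Q`, regarded as an ideal of `S_{P,Q}`. -/
def LOn (K : Type) [Field K] (P Q : Type) [PartialOrder P] [PartialOrder Q] [Finite P]
    (A : Set P) (B : Set Q) : Ideal (MvPolynomial (P × Q) K) :=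
  letI : Fintype A := Fintype.ofFinite A
  Ideal.span (Set.range fun φ : A →o B =>
    ∏ p : A, (X ((p : P), (φ p : Q)) : MvPolynomial (P × Q) K))

/-- `L(Q,P)^τ ⊆ S_{P,Q}`: the ideal generated by `∏_q x_{ψ(q),q}` for order-preserving
`ψ : Q → P` (i.e. `L(Q,P)` with the indices of the variables switched). -/
def LQPtau (K : Type) [Field K] (P Q : Type) [PartialOrder P] [PartialOrder Q] [Fintype Q] :
    Ideal (MvPolynomial (P × Q) K) :=
  Ideal.span (Set.range fun ψ : Q →o P => ∏ q : Q, (X (ψ q, q) : MvPolynomial (P × Q) K))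

/-! ### Monomial ideals -/

/-- A monomial ideal. -/
def IsMonomialIdeal {K : Type} [Field K] {σ : Type} (I : Ideal (MvPolynomial σ K)) : Prop :=
  ∃ A : Set (σ →₀ ℕ), I = Ideal.span ((fun a => (monomial a (1 : K) : MvPolynomial σ K)) '' A)

/-- `x^a` is a minimal monomial generator of the monomial ideal `I`. -/
def IsMinGen {K : Type} [Field K] {σ : Type} (I : Ideal (MvPolynomial σ K)) (a : σ →₀ ℕ) : Prop :=
  (monomial a (1 : K) : MvPolynomial σ K) ∈ I ∧
    ∀ b : σ →₀ ℕ, b ≤ a → b ≠ a → (monomial b (1 : K) : MvPolynomial σ K) ∉ I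

/-! ### Minimal multigraded free resolutions and Betti numbers -/

/-- A minimal multigraded free resolution of `S/I` for an ideal
`I ⊆ S = K[x_v : v ∈ σ]` (with the fine `ℕ^σ`-grading): the zeroth free module is `S`
itself, `d0` maps `F_1` onto `I ⊆ S`, the complex is exact elsewhere, all entries of the
matrices of the higher differentials lie in the irrelevant maximal ideal (zero constant
term), and all maps are homogeneous with respect to the assigned multidegrees `deg`. -/
structure MGMinRes {K : Type} [Field K] {σ : Type} (I : Ideal (MvPolynomial σ K)) where
  B : ℕ → Type
  finB : ∀ i, Fintype (B i)
  deg : ∀ i, B i → (σ →₀ ℕ)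
  d0 : (B 0 →₀ MvPolynomial σ K) →ₗ[MvPolynomial σ K] MvPolynomial σ K
  d : ∀ i, (B (i+1) →₀ MvPolynomial σ K) →ₗ[MvPolynomial σ K] (B i →₀ MvPolynomial σ K)
  range_d0 : LinearMap.range d0 = I
  exact0 : LinearMap.ker d0 = LinearMap.range (d 0)
  exactd : ∀ i, LinearMap.ker (d i) = LinearMap.range (d (i+1))
  min_d : ∀ i b b', constantCoeff ((d i (Finsupp.single b 1)) b') = 0
  hom0 : ∀ b m, m ∈ (d0 (Finsupp.single b 1)).support → m = deg 0 b
  homd : ∀ i (b : B (i+1)) (b' : B i) m,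
    m ∈ ((d i (Finsupp.single b 1)) b').support → m + deg i b' = deg (i+1) b

namespace MGMinRes

variable {K : Type} [Field K] {σ : Type} {I : Ideal (MvPolynomial σ K)}

/-- The total Betti number `β_i(S/I)`. -/
def betaT (F : MGMinRes I) : ℕ → ℕ
  | 0 => 1
  | i+1 => Nat.card (F.B i)

/-- The multigraded Betti number `β_{i,a}(S/I)`. -/
def beta (F : MGMinRes I) : ℕ → (σ →₀ ℕ) → ℕ
  | 0, a => if a = 0 then 1 else 0
  | i+1, a => Nat.card {b : F.B i // F.deg i b = a}

/-- The graded Betti number `β_{i,j}(S/I)`. -/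
def betaG (F : MGMinRes I) : ℕ → ℕ → ℕ
  | 0, j => if j = 0 then 1 else 0
  | i+1, j => Nat.card {b : F.B i // (F.deg i b).sum (fun _ n => n) = j}

/-- The projective dimension of `S/I`. -/
def pdim (F : MGMinRes I) : ℕ := sSup {i | F.betaT i ≠ 0}

/-- The Castelnuovo–Mumford regularity of `S/I`. -/
def reg (F : MGMinRes I) : ℕ := sSup {d | ∃ i j, F.betaG i j ≠ 0 ∧ j = i + d}

/-- The minimal degree of a generator of `I`. -/
def minDegGen (F : MGMinRes I) : ℕ := sInf {j | F.betaG 1 j ≠ 0}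

/-- The length of the linear strand of `S/I`:
`lin(S/I) = max { i : β_{i,i+d-1}(S/I) ≠ 0 }` where `d` is the minimal degree
of a generator of `I`. -/
def lin (F : MGMinRes I) : ℕ := sSup {i | F.betaG i (i + F.minDegGen - 1) ≠ 0}

end MGMinRes

/-- `I` has a linear resolution. -/
def HasLinearResolution {K : Type} [Field K] {σ : Type} (I : Ideal (MvPolynomial σ K)) : Prop :=
  ∀ F : MGMinRes I, ∀ i j, 1 ≤ i → j ≠ i + F.minDegGen - 1 → F.betaG i j = 0

/-- A minimal free resolution of a module `M` over a ring `A`, with minimality taken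
with respect to the (maximal) ideal `𝔪`. -/
structure MinFreeResMod (A : Type) [CommRing A] (𝔪 : Ideal A)
    (M : Type) [AddCommGroup M] [Module A M] where
  B : ℕ → Type
  finB : ∀ i, Fintype (B i)
  aug : (B 0 →₀ A) →ₗ[A] M
  d : ∀ i, (B (i+1) →₀ A) →ₗ[A] (B i →₀ A)
  aug_surj : Function.Surjective aug
  exact0 : LinearMap.ker aug = LinearMap.range (d 0)
  exactd : ∀ i, LinearMap.ker (d i) = LinearMap.range (d (i+1))
  min_d : ∀ i b b', (d i (Finsupp.single b 1)) b' ∈ 𝔪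

/-- The `i`-th Betti number of `M` over `A`, i.e. `dim_K Tor_i^A(M, A/𝔪)`. -/
def MinFreeResMod.betti {A : Type} [CommRing A] {𝔪 : Ideal A}
    {M : Type} [AddCommGroup M] [Module A M] (F : MinFreeResMod A 𝔪 M) (i : ℕ) : ℕ :=
  Nat.card (F.B i)

/-! ### Depth, dimension, Cohen–Macaulayness and friends -/

/-- The depth of `M` with respect to `𝔪`: the supremum of the lengths of
`M`-regular sequences contained in `𝔪`. -/
def depthOf (A : Type) [CommRing A] (𝔪 : Ideal A) (M : Type) [AddCommGroup M]
    [Module A M] : ℕ :=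
  sSup {n | ∃ rs : List A, rs.length = n ∧ (∀ r ∈ rs, r ∈ 𝔪) ∧
    RingTheory.Sequence.IsRegular M rs}

/-- The Krull dimension of a module (the dimension of its support). -/
def moduleKDim (A : Type) [CommRing A] (M : Type) [AddCommGroup M] [Module A M] :
    WithBot ℕ∞ :=
  Order.krullDim (Module.support A M)

/-- `M` is a Cohen–Macaulay `A`-module (w.r.t. the distinguished ideal `𝔪`):
depth equals Krull dimension. -/
def ModCM (A : Type) [CommRing A] (𝔪 : Ideal A) (M : Type) [AddCommGroup M]
    [Module A M] : Prop :=
  (depthOf A 𝔪 M : WithBot ℕ∞) = moduleKDim A M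

/-- The irrelevant maximal ideal of `S/I`. -/
def irrel {K : Type} [Field K] {σ : Type} (I : Ideal (MvPolynomial σ K)) :
    Ideal (MvPolynomial σ K ⧸ I) :=
  Ideal.map (Ideal.Quotient.mk I) (Ideal.span (Set.range (X : σ → MvPolynomial σ K)))

/-- `S/I` is Cohen–Macaulay. -/
def IsCMQuot {K : Type} [Field K] {σ : Type} (I : Ideal (MvPolynomial σ K)) : Prop :=
  ModCM (MvPolynomial σ K ⧸ I) (irrel I) (MvPolynomial σ K ⧸ I)

/-- The height of an ideal: the infimum of the heights of the primes containing it. -/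
def idealHeight {A : Type} [CommRing A] (I : Ideal A) : ℕ∞ :=
  sInf {h | ∃ p : PrimeSpectrum A, I ≤ p.asIdeal ∧ Order.height p = h}

/-- An ideal is unmixed if all its associated primes have the same height. -/
def UnmixedIdeal {A : Type} [CommRing A] (I : Ideal A) : Prop :=
  ∀ p ∈ associatedPrimes A (A ⧸ I), ∀ q ∈ associatedPrimes A (A ⧸ I),
    idealHeight p = idealHeight q

/-- The Alexander dual of a squarefree monomial ideal: the ideal generated by the
products of the variables in the minimal primes of `I`. -/
def alexDual {K : Type} [Field K] {σ : Type} [Finite σ] (I : Ideal (MvPolynomial σ K)) :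
    Ideal (MvPolynomial σ K) :=
  Ideal.span ((fun p : Ideal (MvPolynomial σ K) =>
      ∏ v ∈ (Set.toFinite {v : σ | (X v : MvPolynomial σ K) ∈ p}).toFinset,
        (X v : MvPolynomial σ K)) '' I.minimalPrimes)

/-- `S/I` satisfies Serre's condition `(S_r)`. -/
def SerreSr {K : Type} [Field K] {σ : Type} (I : Ideal (MvPolynomial σ K)) (r : ℕ) : Prop :=
  ∀ p : PrimeSpectrum (MvPolynomial σ K ⧸ I),
    min (r : ℕ∞) (Order.height p) ≤
      (depthOf (Localization.AtPrime p.asIdeal) (IsLocalRing.maximalIdeal _)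
        (Localization.AtPrime p.asIdeal) : ℕ∞)

/-- A submodule of `S/I` is homogeneous (graded) for the standard grading. -/
def IsHomogSub {K : Type} [Field K] {σ : Type} (I : Ideal (MvPolynomial σ K))
    (N : Submodule (MvPolynomial σ K ⧸ I) (MvPolynomial σ K ⧸ I)) : Prop :=
  ∀ f : MvPolynomial σ K, Ideal.Quotient.mk I f ∈ N →
    ∀ n : ℕ, Ideal.Quotient.mk I (homogeneousComponent n f) ∈ N

/-- `S/I` is sequentially Cohen–Macaulay: there is a finite filtration by graded
submodules whose successive quotients are Cohen–Macaulay of strictly increasing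
Krull dimension. -/
def SeqCM {K : Type} [Field K] {σ : Type} (I : Ideal (MvPolynomial σ K)) : Prop :=
  ∃ (r : ℕ) (Mf : ℕ → Submodule (MvPolynomial σ K ⧸ I) (MvPolynomial σ K ⧸ I)),
    Mf 0 = ⊥ ∧ Mf r = ⊤ ∧ (∀ i < r, Mf i < Mf (i+1)) ∧
    (∀ i ≤ r, IsHomogSub I (Mf i)) ∧
    (∀ i < r, ModCM (MvPolynomial σ K ⧸ I) (irrel I)
      (↥(Mf (i+1)) ⧸ (Submodule.comap (Mf (i+1)).subtype (Mf i)))) ∧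
    (∀ i, i + 1 < r →
      moduleKDim (MvPolynomial σ K ⧸ I)
          (↥(Mf (i+1)) ⧸ (Submodule.comap (Mf (i+1)).subtype (Mf i))) <
      moduleKDim (MvPolynomial σ K ⧸ I)
          (↥(Mf (i+2)) ⧸ (Submodule.comap (Mf (i+2)).subtype (Mf (i+1)))))

/-- `S/I` is locally Cohen–Macaulay: every localization at a prime other than the
irrelevant maximal ideal is Cohen–Macaulay. -/
def LocallyCMQuot {K : Type} [Field K] {σ : Type} (I : Ideal (MvPolynomial σ K)) : Prop :=
  ∀ p : PrimeSpectrum (MvPolynomial σ K ⧸ I), p.asIdeal ≠ irrel I →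
    ModCM (Localization.AtPrime p.asIdeal) (IsLocalRing.maximalIdeal _)
      (Localization.AtPrime p.asIdeal)

/-! ### The Stanley–Reisner complex of a squarefree monomial ideal, shellability -/

/-- `F` is a face of the Stanley–Reisner complex of `I`. -/
def SRFace {K : Type} [Field K] {σ : Type} (I : Ideal (MvPolynomial σ K))
    (F : Finset σ) : Prop :=
  (∏ v ∈ F, (X v : MvPolynomial σ K)) ∉ I

/-- `F` is a facet of the Stanley–Reisner complex of `I`. -/
def SRFacet {K : Type} [Field K] {σ : Type} (I : Ideal (MvPolynomial σ K))
    (F : Finset σ) : Prop :=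
  SRFace I F ∧ ∀ G, SRFace I G → F ⊆ G → F = G

/-- The Stanley–Reisner complex of `I` is shellable: its facets admit an ordering
`F_1, …, F_m` such that for every `j > 1`, `F_j ∩ (F_1 ∪ ⋯ ∪ F_{j-1})` is a nonempty
union of facets of the boundary of `F_j`. -/
def SRShellable {K : Type} [Field K] {σ : Type} (I : Ideal (MvPolynomial σ K)) : Prop :=
  ∃ (m : ℕ) (e : Fin m ≃ {F : Finset σ // SRFacet I F}),
    ∀ j : Fin m, 0 < (j : ℕ) →
      ∃ 𝒢 : Set (Finset σ), 𝒢.Nonempty ∧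
        (∀ G ∈ 𝒢, G ⊆ (e j : Finset σ) ∧ G.card + 1 = (e j : Finset σ).card) ∧
        (∀ H : Finset σ,
          (H ⊆ (e j : Finset σ) ∧ ∃ i : Fin m, i < j ∧ H ⊆ (e i : Finset σ)) ↔
          ∃ G ∈ 𝒢, H ⊆ G)

/-- The Stanley–Reisner complex of `I` is pure. -/
def SRPure {K : Type} [Field K] {σ : Type} (I : Ideal (MvPolynomial σ K)) : Prop :=
  ∀ F G : Finset σ, SRFacet I F → SRFacet I G → F.card = G.card

/-! ### Weakly polymatroidal ideals and linear quotients -/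

/-- `I` is weakly polymatroidal with respect to the given linear order on the
variables (larger = earlier, i.e. `x_1 > x_2 > ⋯`). -/
def WeaklyPolymatroidal {K : Type} [Field K] {σ : Type} [LinearOrder σ]
    (I : Ideal (MvPolynomial σ K)) : Prop :=
  ∀ a b : σ →₀ ℕ, IsMinGen I a → IsMinGen I b →
    ∀ t : σ, (∀ s, t < s → a s = b s) → b t < a t →
      ∃ l, l < t ∧ b l ≠ 0 ∧
        (monomial (b + Finsupp.single t 1 - Finsupp.single l 1) (1 : K) :
          MvPolynomial σ K) ∈ I

/-- `I` has linear quotients. -/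
def HasLinearQuotients {K : Type} [Field K] {σ : Type} (I : Ideal (MvPolynomial σ K)) : Prop :=
  ∃ (r : ℕ) (e : Fin r ≃ {a : σ →₀ ℕ // IsMinGen I a}),
    ∀ i : Fin r, ∃ V : Set σ,
      Submodule.colon
        (Ideal.span ((fun j : Fin r =>
          (monomial ((e j : σ →₀ ℕ)) (1 : K) : MvPolynomial σ K)) '' {j | j < i}))
        (Ideal.span {(monomial ((e i : σ →₀ ℕ)) (1 : K) : MvPolynomial σ K)})
      = Ideal.span ((fun v => (X v : MvPolynomial σ K)) '' V)

end

noncomputable section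

/-- Order-preserving multivalued maps from `Q` to `P`, encoded as subsets of `Q × P`. -/
def MHomCond (P Q : Type) [PartialOrder P] [PartialOrder Q] (ψ : Set (Q × P)) : Prop :=
  (∀ q : Q, ∃ p : P, (q, p) ∈ ψ) ∧
  (∀ q q' : Q, q < q' → ∃ p p' : P, (q, p) ∈ ψ ∧ (q', p') ∈ ψ ∧ p < p')

/-- The monomial prime ideal `𝔭_ψ = (x_{p,q} : (q,p) ∈ ψ)` attached to `ψ ⊆ Q × P`. -/
def pPsi (K : Type) [Field K] {P Q : Type} (ψ : Set (Q × P)) :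
    Ideal (MvPolynomial (P × Q) K) :=
  Ideal.span ((fun qp : Q × P => (MvPolynomial.X (qp.2, qp.1) : MvPolynomial (P × Q) K)) '' ψ)

end

/-!
Every prime `𝔭 ⊇ L(P,Q)` contains `u_φ` for the constant maps `φ ≡ q`, hence some variable
`x_{p,q}` for every `q`; so `𝔭` contains a "graph prime" `𝔭_g = (x_{g(q),q} : q ∈ Q)` of a map
`g : Q → P`. Graph primes are generated by `|Q|` variables, so they have height `|Q|` and
`S/𝔭_g` is a polynomial ring in `|P||Q| - |Q|` variables. Two graph primes are comparable only
when equal, so `𝔭_g` is a minimal prime of `L(P,Q)` as soon as it contains `L(P,Q)`, which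
happens iff every `u_φ` involves some `x_{g(q),q}`, i.e. iff every `g ∘ φ` has a fixed point;
constant maps `g` always qualify. Finally `dim K[P,Q]` lies between `dim S/𝔭_g` for a constant
`g` and `dim S - height L(P,Q)`, and both equal `|Q|(|P| - 1)`.
-/

namespace MvPolynomial

variable {R : Type*} [CommRing R] {σ : Type*}

theorem ker_killCompl_subtype_val (s : Set σ) :
    RingHom.ker (killCompl (R := R) (Subtype.val_injective : Function.Injective
      ((↑) : ↥sᶜ → σ))) = Ideal.span (X '' s) := by
  apply le_antisymm
  · intro x hx
    rw [RingHom.mem_ker] at hx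
    rw [mem_ideal_span_X_image]
    intro m hm
    by_contra! hms
    have hsub : ↑m.support ⊆ Set.range ((↑) : ↥sᶜ → σ) := fun i hi =>
      ⟨⟨i, fun his => Finsupp.mem_support_iff.mp hi (hms i his)⟩, rfl⟩
    have := congrArg (coeff (m.comapDomain _ Subtype.val_injective.injOn)) hx
    rw [coeff_killCompl, Finsupp.mapDomain_comapDomain _ Subtype.val_injective _ hsub,
      coeff_zero] at this
    exact mem_support_iff.mp hm this
  · rw [Ideal.span_le]
    rintro _ ⟨i, hi, rfl⟩
    simp [killCompl, hi]

theorem killCompl_surjective {τ : Type*} {f : σ → τ} (hf : Function.Injective f) :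
    Function.Surjective (killCompl (R := R) hf) :=
  fun p => ⟨rename f p, killCompl_rename_app hf p⟩

theorem isPrime_span_X_image [IsDomain R] (s : Set σ) :
    (Ideal.span (X '' s : Set (MvPolynomial σ R))).IsPrime := by
  rw [← ker_killCompl_subtype_val]
  exact RingHom.ker_isPrime _

theorem X_mem_span_X_image_iff [Nontrivial R] {s : Set σ} {i : σ} :
    (X i : MvPolynomial σ R) ∈ Ideal.span (X '' s) ↔ i ∈ s := by
  simp [mem_ideal_span_X_image, support_X, Finsupp.single_apply_eq_zero]

theorem prod_X_mem_span_X_image_iff [IsDomain R] {ι : Type*} {s : Set σ} (t : Finset ι)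
    (f : ι → σ) :
    ∏ i ∈ t, (X (f i) : MvPolynomial σ R) ∈ Ideal.span (X '' s) ↔ ∃ i ∈ t, f i ∈ s := by
  have := isPrime_span_X_image (R := R) s
  simp [Ideal.IsPrime.prod_mem_iff, X_mem_span_X_image_iff]

theorem ringKrullDim_quotient_span_X_image [IsNoetherianRing R] [Finite σ] (s : Set σ) :
    ringKrullDim (MvPolynomial σ R ⧸ Ideal.span (X '' s : Set (MvPolynomial σ R))) =
      ringKrullDim R + Nat.card ↥sᶜ := by
  rw [← ker_killCompl_subtype_val, ringKrullDim_eq_of_ringEquiv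
    (Ideal.quotientKerAlgEquivOfSurjective (killCompl_surjective _)).toRingEquiv,
    ringKrullDim_of_isNoetherianRing]

theorem height_span_X_image [IsNoetherianRing R] [IsDomain R] [Finite σ] (s : Set σ) :
    (Ideal.span (X '' s : Set (MvPolynomial σ R))).height = s.ncard := by
  apply le_antisymm
  · have := isPrime_span_X_image (R := R) s
    refine (Ideal.height_le_card_of_mem_minimalPrimes_span (s.toFinite.image X)
      (p := Ideal.span (X '' s : Set (MvPolynomial σ R)))
      (by rw [Ideal.minimalPrimes_eq_subsingleton_self]; rfl)).trans ?_
    exact_mod_cast Set.ncard_image_le s.toFinite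
  · induction s, s.toFinite using Set.Finite.induction_on with
    | empty => simp
    | @insert i t hit ht ih =>
      have := isPrime_span_X_image (R := R) t
      have := isPrime_span_X_image (R := R) (insert i t)
      have hlt : Ideal.span (X '' t) < Ideal.span (X '' insert i t : Set (MvPolynomial σ R)) :=
        lt_of_le_of_ne (Ideal.span_mono (Set.image_mono (Set.subset_insert i t))) fun h =>
          hit (X_mem_span_X_image_iff.mp (h ▸ X_mem_span_X_image_iff.mpr (Set.mem_insert i t)))
      rw [Set.ncard_insert_of_notMem hit ht, Nat.cast_add, Nat.cast_one]
      exact (add_le_add_left ih 1).trans (Ideal.height_add_one_le_of_lt_of_isPrime hlt)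

end MvPolynomial

theorem idealHeight_eq_height {A : Type} [CommRing A] (I : Ideal A) :
    idealHeight I = I.height := by
  apply le_antisymm
  · rw [Ideal.height_eq_inf_minimalPrimes]
    refine le_iInf₂ fun J hJ => sInf_le ⟨⟨J, hJ.1.1⟩, hJ.1.2, ?_⟩
    exact (PrimeSpectrum.height_eq_orderHeight ⟨J, hJ.1.1⟩).symm
  · refine le_sInf ?_
    rintro _ ⟨p, hIp, rfl⟩
    rw [← PrimeSpectrum.height_eq_orderHeight]
    exact Ideal.height_mono hIp

theorem le_natCast_sub_of_natCast_add_le {d : WithBot ℕ∞} {m n : ℕ}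
    (h : ((n : ℕ∞) : WithBot ℕ∞) + d ≤ m) : d ≤ (m - n : ℕ) := by
  induction d using WithBot.recBotCoe with
  | bot => exact bot_le
  | coe e =>
    induction e using ENat.recTopCoe with
    | top => norm_cast at h
    | coe k =>
      norm_cast at h
      exact (WithBot.coe_le_coe.mpr (by exact_mod_cast (by omega : k ≤ m - n))).trans_eq
        (WithBot.coe_natCast _)

theorem Ideal.height_add_ringKrullDim_quotient_le {R : Type*} [CommRing R] (I : Ideal R) :
    (I.height : WithBot ℕ∞) + ringKrullDim (R ⧸ I) ≤ ringKrullDim R := by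
  rw [ringKrullDim_quotient]
  cases isEmpty_or_nonempty (PrimeSpectrum.zeroLocus (R := R) I) with
  | inl h => simp [Order.krullDim_eq_bot]
  | inr h =>
    rw [Order.krullDim_eq_iSup_coheight_of_nonempty, ← WithBot.coe_add, ENat.add_iSup]
    have : Nonempty (PrimeSpectrum R) := ⟨h.some.1⟩
    rw [ringKrullDim, Order.krullDim_eq_iSup_height_add_coheight_of_nonempty, WithBot.coe_le_coe]
    refine iSup_le fun p => le_iSup_of_le p.1 (add_le_add ?_ ?_)
    · rw [← PrimeSpectrum.height_eq_orderHeight]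
      exact Ideal.height_mono p.2
    · exact Order.coheight_le_coheight_apply_of_strictMono _ (Subtype.strictMono_coe _) p

section GraphIdeal

variable (K : Type) [Field K] {P Q : Type}

noncomputable def graphIdeal (g : Q → P) : Ideal (MvPolynomial (P × Q) K) :=
  Ideal.span (Set.range fun q => X (g q, q))

theorem graphIdeal_eq_span_X_image (g : Q → P) :
    graphIdeal K g = Ideal.span (X '' Set.range fun q => (g q, q)) := by
  rw [graphIdeal, ← Set.range_comp]
  rfl

instance graphIdeal_isPrime (g : Q → P) : (graphIdeal K g).IsPrime := by
  rw [graphIdeal_eq_span_X_image]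
  exact isPrime_span_X_image _

theorem height_graphIdeal [Finite P] [Fintype Q] (g : Q → P) :
    (graphIdeal K g).height = Fintype.card Q := by
  rw [graphIdeal_eq_span_X_image, height_span_X_image,
    Set.ncard_range_of_injective fun q q' h => congrArg Prod.snd h, Nat.card_eq_fintype_card]

theorem ringKrullDim_quotient_graphIdeal [Fintype P] [Fintype Q] (g : Q → P) :
    ringKrullDim (MvPolynomial (P × Q) K ⧸ graphIdeal K g) =
      (Fintype.card Q * (Fintype.card P - 1) : ℕ) := by
  rw [graphIdeal_eq_span_X_image, ringKrullDim_quotient_span_X_image,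
    ringKrullDim_eq_zero_of_field, zero_add, Nat.card_coe_set_eq,
    Set.ncard_compl, Set.ncard_range_of_injective fun q q' h => congrArg Prod.snd h,
    Nat.card_prod, Nat.card_eq_fintype_card, Nat.card_eq_fintype_card, Nat.mul_sub_one,
    Nat.mul_comm]

theorem eq_of_graphIdeal_le {g g' : Q → P} (h : graphIdeal K g ≤ graphIdeal K g') : g = g' := by
  funext q
  have hq := h (Ideal.subset_span ⟨q, rfl⟩)
  rw [graphIdeal_eq_span_X_image, X_mem_span_X_image_iff] at hq
  obtain ⟨q', hq'⟩ := hq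
  simp only [Prod.mk.injEq] at hq'
  rw [← hq'.1, hq'.2]

variable [PartialOrder P] [PartialOrder Q] [Fintype P]

theorem LPQ_le_graphIdeal_iff (g : Q → P) :
    LPQ K P Q ≤ graphIdeal K g ↔ ∀ φ : P →o Q, ∃ p, g (φ p) = p := by
  simp [LPQ, Ideal.span_le, Set.range_subset_iff, graphIdeal_eq_span_X_image,
    prod_X_mem_span_X_image_iff]

theorem exists_graphIdeal_le (𝔭 : Ideal (MvPolynomial (P × Q) K)) [𝔭.IsPrime]
    (h : LPQ K P Q ≤ 𝔭) : ∃ g : Q → P, graphIdeal K g ≤ 𝔭 := by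
  have : ∀ q, ∃ p, (X (p, q) : MvPolynomial (P × Q) K) ∈ 𝔭 := fun q => by
    obtain ⟨p, -, hp⟩ := Ideal.IsPrime.prod_mem_iff.mp
      (h (Ideal.subset_span ⟨OrderHom.const P q, rfl⟩))
    exact ⟨p, hp⟩
  choose g hg using this
  exact ⟨g, Ideal.span_le.mpr (Set.range_subset_iff.mpr hg)⟩

theorem graphIdeal_mem_minimalPrimes {g : Q → P} (h : LPQ K P Q ≤ graphIdeal K g) :
    graphIdeal K g ∈ (LPQ K P Q).minimalPrimes := by
  refine ⟨⟨inferInstance, h⟩, fun J ⟨hJ, hLJ⟩ hJg => ?_⟩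
  obtain ⟨g', hg'⟩ := exists_graphIdeal_le K J hLJ
  rwa [eq_of_graphIdeal_le K (hg'.trans hJg)] at hg'

theorem LPQ_le_graphIdeal_const (p₀ : P) : LPQ K P Q ≤ graphIdeal K fun _ : Q => p₀ :=
  (LPQ_le_graphIdeal_iff K _).mpr fun _ => ⟨p₀, rfl⟩

variable [Fintype Q]

theorem card_le_height_of_LPQ_le (𝔭 : Ideal (MvPolynomial (P × Q) K)) [𝔭.IsPrime]
    (h : LPQ K P Q ≤ 𝔭) : (Fintype.card Q : ℕ∞) ≤ 𝔭.height := by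
  obtain ⟨g, hg⟩ := exists_graphIdeal_le K 𝔭 h
  exact height_graphIdeal K g ▸ Ideal.height_mono hg

variable [Nonempty P]

theorem height_LPQ : (LPQ K P Q).height = Fintype.card Q := by
  obtain ⟨p₀⟩ := ‹Nonempty P›
  apply le_antisymm
  · exact height_graphIdeal K (fun _ : Q => p₀) ▸
      Ideal.height_mono (LPQ_le_graphIdeal_const K p₀)
  · rw [Ideal.height_eq_inf_minimalPrimes]
    exact le_iInf₂ fun 𝔭 h𝔭 => have := h𝔭.1.1; card_le_height_of_LPQ_le K 𝔭 h𝔭.1.2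

theorem ringKrullDim_quotient_LPQ :
    ringKrullDim (MvPolynomial (P × Q) K ⧸ LPQ K P Q) =
      (Fintype.card Q * (Fintype.card P - 1) : ℕ) := by
  obtain ⟨p₀⟩ := ‹Nonempty P›
  apply le_antisymm
  · have h := (LPQ K P Q).height_add_ringKrullDim_quotient_le
    rw [height_LPQ K (Q := Q), ringKrullDim_of_isNoetherianRing, ringKrullDim_eq_zero_of_field K,
      zero_add, Nat.card_prod, Nat.card_eq_fintype_card, Nat.card_eq_fintype_card] at h
    exact (le_natCast_sub_of_natCast_add_le h).trans_eq (by rw [Nat.mul_sub_one, Nat.mul_comm])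
  · rw [← ringKrullDim_quotient_graphIdeal K fun _ : Q => p₀]
    exact ringKrullDim_le_of_surjective _
      (Ideal.Quotient.factor_surjective (LPQ_le_graphIdeal_const K p₀))

end GraphIdeal

theorem stmt_4_general (K : Type) [Field K] (P Q : Type) [PartialOrder P] [PartialOrder Q]
    [Fintype P] [Fintype Q] [Nonempty P] :
    (∀ 𝔭 ∈ (LPQ K P Q).minimalPrimes, (Fintype.card Q : ℕ∞) ≤ idealHeight 𝔭) ∧
    (∃ 𝔭 ∈ (LPQ K P Q).minimalPrimes, idealHeight 𝔭 = (Fintype.card Q : ℕ∞)) ∧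
    (∀ ψ : Q →o P,
      (Ideal.span (Set.range fun q : Q => (X (ψ q, q) : MvPolynomial (P × Q) K))
          ∈ (LPQ K P Q).minimalPrimes ↔
        ∀ φ : P →o Q, ∃ p : P, ψ (φ p) = p)) ∧
    idealHeight (LPQ K P Q) = (Fintype.card Q : ℕ∞) ∧
    ringKrullDim (MvPolynomial (P × Q) K ⧸ LPQ K P Q) =
      ((Fintype.card Q * (Fintype.card P - 1) : ℕ) : WithBot ℕ∞) := by
  obtain ⟨p₀⟩ := ‹Nonempty P›
  refine ⟨fun 𝔭 h𝔭 => ?_, ?_, fun ψ => ?_, ?_, ringKrullDim_quotient_LPQ K⟩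
  · have := h𝔭.1.1
    rw [idealHeight_eq_height]
    exact card_le_height_of_LPQ_le K 𝔭 h𝔭.1.2
  · refine ⟨graphIdeal K fun _ => p₀,
      graphIdeal_mem_minimalPrimes K (LPQ_le_graphIdeal_const K p₀), ?_⟩
    rw [idealHeight_eq_height, height_graphIdeal]
  · show graphIdeal K ψ ∈ _ ↔ _
    exact ⟨fun h => (LPQ_le_graphIdeal_iff K ψ).mp h.1.2,
      fun h => graphIdeal_mem_minimalPrimes K ((LPQ_le_graphIdeal_iff K ψ).mpr h)⟩
  · rw [idealHeight_eq_height, height_LPQ]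

/-- Heights of the minimal primes of `L(P,Q)`, its height, and the
Krull dimension of `K[P,Q]`. -/
theorem stmt_4 (K : Type) [Field K] (P Q : Type) [PartialOrder P] [PartialOrder Q]
    [Fintype P] [Fintype Q] [Nonempty P] [Nonempty Q] :
    (∀ 𝔭 ∈ (LPQ K P Q).minimalPrimes, (Fintype.card Q : ℕ∞) ≤ idealHeight 𝔭) ∧
    (∃ 𝔭 ∈ (LPQ K P Q).minimalPrimes, idealHeight 𝔭 = (Fintype.card Q : ℕ∞)) ∧
    (∀ ψ : Q →o P,
      (Ideal.span (Set.range fun q : Q => (X (ψ q, q) : MvPolynomial (P × Q) K))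
          ∈ (LPQ K P Q).minimalPrimes ↔
        ∀ φ : P →o Q, ∃ p : P, ψ (φ p) = p)) ∧
    idealHeight (LPQ K P Q) = (Fintype.card Q : ℕ∞) ∧
    ringKrullDim (MvPolynomial (P × Q) K ⧸ LPQ K P Q) =
      ((Fintype.card Q * (Fintype.card P - 1) : ℕ) : WithBot ℕ∞) :=
  stmt_4_general K P Q
end

section
/- Let P and Q be finite posets and let P' ⊆ P be a subposet such that every order-preserving map φ : P' → Q extends to an order-preserving map P → Q. Then β_i^{S_{P,Q}}(K[P,Q]) ≥ β_i^{S_{P',Q}}(K[P',Q]) for all i. -/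
open MvPolynomial

set_option maxHeartbeats 1000000
set_option synthInstance.maxHeartbeats 1000000

noncomputable section

attribute [local instance] Classical.propDecidable

end

/-!
Setting the variables `x_{p,q}` with `p ∉ P'` equal to `1` maps `S_{P,Q}` onto `S_{P',Q}`, and by
the extension hypothesis it maps `L(P,Q)` onto `L(P',Q)`. The elements `x_{p,q} - 1` form a
regular sequence modulo every ideal `L(P,Q) + (x_v - 1 : v ∈ W)`, so tensoring a minimal free
resolution of `K[P,Q]` with `S_{P',Q}` gives a free resolution of `K[P',Q]` with the same ranks.
Chain maps between it and a minimal resolution of `K[P',Q]` compose to a map homotopic to the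
identity; modulo the irrelevant ideal the homotopy vanishes by minimality, so the ranks of the
minimal resolution can only be smaller.
-/

theorem exists_dependent_seq {T : ℕ → Type*} (p : ∀ n, T n → Prop)
    (r : ∀ n, T n → T (n + 1) → Prop) (t₀ : T 0) (h₀ : p 0 t₀)
    (h : ∀ n t, p n t → ∃ t', p (n + 1) t' ∧ r n t t') :
    ∃ f : ∀ n, T n, f 0 = t₀ ∧ ∀ n, r n (f n) (f (n + 1)) := by
  choose next hnext using h
  let g : ∀ n, {t // p n t} := fun n =>
    Nat.rec ⟨t₀, h₀⟩ (fun n t => ⟨next n t.1 t.2, (hnext n t.1 t.2).1⟩) n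
  exact ⟨fun n => (g n).1, rfl, fun n => (hnext n (g n).1 (g n).2).2⟩

section Modules

variable {R M N L : Type*} [CommRing R] [AddCommGroup M] [Module R M] [AddCommGroup N]
  [Module R N] [AddCommGroup L] [Module R L]

open LinearMap Submodule

theorem LinearMap.exists_comp_eq_of_range_le {A : Type*} (p : M →ₗ[R] N)
    (f : (A →₀ R) →ₗ[R] N) (h : range f ≤ range p) : ∃ g, p ∘ₗ g = f := by
  choose g hg using fun a => h ⟨Finsupp.single a 1, rfl⟩
  exact ⟨Finsupp.linearCombination R g, Finsupp.lhom_ext' fun a => ext_ring (by simp [hg])⟩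

theorem Ideal.smul_top_self (J : Ideal R) : J • (⊤ : Submodule R R) = J := by
  rw [smul_eq_mul, Ideal.mul_top]

theorem Finsupp.mem_ideal_smul_top_iff {ι : Type*} (J : Ideal R) (x : ι →₀ R) :
    x ∈ J • (⊤ : Submodule R (ι →₀ R)) ↔ ∀ i, x i ∈ J := by
  rw [← Finsupp.submodule_top, ← Finsupp.submodule_smul, Finsupp.mem_submodule_iff]
  simp only [Ideal.smul_top_self]

theorem LinearMap.apply_mem_smul_top (f : M →ₗ[R] N) {J : Ideal R} {x : M}
    (hx : x ∈ J • (⊤ : Submodule R M)) : f x ∈ J • (⊤ : Submodule R N) :=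
  smul_comap_le_comap_smul f ⊤ J (by rwa [comap_top])

-- `y` is a nonzerodivisor on `coker d ⊗ R/J` if it is one on `L ⊗ R/J` and `M → N → L` stays
-- exact at `N` after tensoring with `R/J`.
theorem mem_range_sup_smul_top_of_smul_mem {d : M →ₗ[R] N} {δ : N →ₗ[R] L} (hδ : δ ∘ₗ d = 0)
    {J : Ideal R} {y : R}
    (hy : ∀ l : L, y • l ∈ J • (⊤ : Submodule R L) → l ∈ J • (⊤ : Submodule R L))
    (hexact : (J • ⊤ : Submodule R L).comap δ ≤ range d ⊔ J • ⊤) {n : N}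
    (hn : y • n ∈ range d ⊔ J • (⊤ : Submodule R N)) : n ∈ range d ⊔ J • (⊤ : Submodule R N) := by
  obtain ⟨_, ⟨u, rfl⟩, j, hj, hdj⟩ := mem_sup.1 hn
  refine hexact (hy _ ?_)
  rw [← map_smul, ← hdj, map_add, ← comp_apply, hδ, LinearMap.zero_apply, zero_add]
  exact δ.apply_mem_smul_top hj

-- The long exact `Tor` sequence of `0 → R/J → R/J → R/(J + (y)) → 0`, multiplication by `y` in the
-- middle, in elementwise form: exactness at `M` after tensoring with `R/J` passes to `R/(J + (y))`.
theorem comap_smul_top_sup_span_le {E : Type*} [AddCommGroup E] [Module R E]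
    {d : M →ₗ[R] N} {d' : E →ₗ[R] M} {J : Ideal R} {y : R}
    (hy : ∀ n : N, y • n ∈ range d ⊔ J • (⊤ : Submodule R N) → n ∈ range d ⊔ J • ⊤)
    (hexact : (J • ⊤ : Submodule R N).comap d ≤ range d' ⊔ J • ⊤) :
    ((J ⊔ Ideal.span {y}) • ⊤ : Submodule R N).comap d ≤ range d' ⊔ (J ⊔ Ideal.span {y}) • ⊤ := by
  intro x hx
  rw [mem_comap, sup_smul, ideal_span_singleton_smul, mem_sup] at hx
  obtain ⟨j, hj, _, ⟨n, -, rfl⟩, hdx⟩ := hx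
  change j + y • n = d x at hdx
  have hn : n ∈ range d ⊔ J • ⊤ := hy n (by
    rw [show y • n = d x - j by rw [← hdx]; abel]
    exact sub_mem (mem_sup_left ⟨x, rfl⟩) (mem_sup_right hj))
  obtain ⟨_, ⟨u, rfl⟩, j', hj', rfl⟩ := mem_sup.1 hn
  have hxu : x - y • u ∈ range d' ⊔ J • ⊤ := hexact (by
    rw [mem_comap, map_sub, map_smul, ← hdx, smul_add, add_sub_assoc, add_sub_cancel_left]
    exact add_mem hj (smul_mem _ y hj'))
  rw [← sub_add_cancel x (y • u)]
  refine add_mem (sup_le_sup_left (smul_mono_left (le_sup_left : J ≤ J ⊔ Ideal.span {y}) :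
    J • (⊤ : Submodule R M) ≤ _) _ hxu) (mem_sup_right ?_)
  exact smul_mem_smul (mem_sup_right (Ideal.mem_span_singleton_self y)) mem_top

end Modules

-- `B i` indexes a basis of the free module in homological degree `i + 1`; degree `0` is `R`.
structure FreeRes (R : Type*) [CommRing R] (I : Ideal R) where
  B : ℕ → Type
  d0 : (B 0 →₀ R) →ₗ[R] R
  d : ∀ i, (B (i + 1) →₀ R) →ₗ[R] (B i →₀ R)
  range_d0 : LinearMap.range d0 = I
  exact0 : LinearMap.ker d0 = LinearMap.range (d 0)
  exactd : ∀ i, LinearMap.ker (d i) = LinearMap.range (d (i + 1))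

def MGMinRes.toFreeRes {K : Type} [Field K] {σ : Type} {I : Ideal (MvPolynomial σ K)}
    (F : MGMinRes I) : FreeRes (MvPolynomial σ K) I :=
  ⟨F.B, F.d0, F.d, F.range_d0, F.exact0, F.exactd⟩

namespace FreeRes

variable {R : Type*} [CommRing R] {I : Ideal R}

open LinearMap

section Complex

variable (F : FreeRes R I)

theorem d0_comp_d : F.d0 ∘ₗ F.d 0 = 0 :=
  ext fun x => (F.exact0.ge ⟨x, rfl⟩ : _)

theorem d_comp_d (i : ℕ) : F.d i ∘ₗ F.d (i + 1) = 0 :=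
  ext fun x => ((F.exactd i).ge ⟨x, rfl⟩ : _)

theorem range_le_range_d_zero {M : Type*} [AddCommGroup M] [Module R M]
    {g : M →ₗ[R] (F.B 0 →₀ R)} (h : F.d0 ∘ₗ g = 0) : range g ≤ range (F.d 0) := by
  rw [← F.exact0, range_le_ker_iff, h]

theorem range_le_range_d {M : Type*} [AddCommGroup M] [Module R M] {i : ℕ}
    {g : M →ₗ[R] (F.B (i + 1) →₀ R)} (h : F.d i ∘ₗ g = 0) : range g ≤ range (F.d (i + 1)) := by
  rw [← F.exactd, range_le_ker_iff, h]

end Complex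

structure Hom (F₁ F₂ : FreeRes R I) where
  f : ∀ i, (F₁.B i →₀ R) →ₗ[R] (F₂.B i →₀ R)
  comm0 : F₂.d0 ∘ₗ f 0 = F₁.d0
  comm : ∀ i, F₂.d i ∘ₗ f (i + 1) = f i ∘ₗ F₁.d i

variable {F₁ F₂ F₃ : FreeRes R I}

noncomputable def Hom.id (F : FreeRes R I) : F.Hom F :=
  ⟨fun _ => LinearMap.id, comp_id _, fun _ => by rw [id_comp, comp_id]⟩

noncomputable def Hom.comp (β : F₂.Hom F₃) (α : F₁.Hom F₂) : F₁.Hom F₃ where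
  f i := β.f i ∘ₗ α.f i
  comm0 := by rw [← comp_assoc, β.comm0, α.comm0]
  comm i := by rw [← comp_assoc, β.comm, comp_assoc, α.comm, comp_assoc]

theorem Hom.nonempty (F₁ F₂ : FreeRes R I) : Nonempty (F₁.Hom F₂) := by
  obtain ⟨f₀, hf₀⟩ := F₂.d0.exists_comp_eq_of_range_le F₁.d0 (by rw [F₁.range_d0, F₂.range_d0])
  obtain ⟨f, rfl, hf⟩ := exists_dependent_seq
    (fun i (f : (F₁.B i →₀ R) →ₗ[R] (F₂.B i →₀ R)) => range (f ∘ₗ F₁.d i) ≤ range (F₂.d i))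
    (fun i f f' => F₂.d i ∘ₗ f' = f ∘ₗ F₁.d i) f₀
    (F₂.range_le_range_d_zero (by rw [← comp_assoc, hf₀, F₁.d0_comp_d]))
    (fun i f hf => by
      obtain ⟨f', hf'⟩ := (F₂.d i).exists_comp_eq_of_range_le _ hf
      exact ⟨f', F₂.range_le_range_d (by rw [← comp_assoc, hf', comp_assoc, F₁.d_comp_d,
        comp_zero]), hf'⟩)
  exact ⟨⟨f, hf₀, hf⟩⟩

theorem exists_nullHomotopy (s : ∀ i, (F₁.B i →₀ R) →ₗ[R] (F₂.B i →₀ R))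
    (hs0 : F₂.d0 ∘ₗ s 0 = 0) (hs : ∀ i, F₂.d i ∘ₗ s (i + 1) = s i ∘ₗ F₁.d i) :
    ∃ h : ∀ i, (F₁.B i →₀ R) →ₗ[R] (F₂.B (i + 1) →₀ R),
      s 0 = F₂.d 0 ∘ₗ h 0 ∧ ∀ i, s (i + 1) = F₂.d (i + 1) ∘ₗ h (i + 1) + h i ∘ₗ F₁.d i := by
  obtain ⟨h₀, hh₀⟩ := (F₂.d 0).exists_comp_eq_of_range_le (s 0) (F₂.range_le_range_d_zero hs0)
  obtain ⟨h, rfl, hh⟩ := exists_dependent_seq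
    (fun i (h : (F₁.B i →₀ R) →ₗ[R] (F₂.B (i + 1) →₀ R)) =>
      range (s (i + 1) - h ∘ₗ F₁.d i) ≤ range (F₂.d (i + 1)))
    (fun i h h' => F₂.d (i + 1) ∘ₗ h' = s (i + 1) - h ∘ₗ F₁.d i) h₀
    (F₂.range_le_range_d (by rw [comp_sub, hs, ← comp_assoc, hh₀]; abel))
    (fun i h hh => by
      obtain ⟨h', hh'⟩ := (F₂.d (i + 1)).exists_comp_eq_of_range_le _ hh
      refine ⟨h', F₂.range_le_range_d ?_, hh'⟩
      rw [comp_sub, hs, ← comp_assoc, hh', sub_comp, comp_assoc, F₁.d_comp_d, comp_zero]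
      abel)
  exact ⟨h, hh₀.symm, fun i => by rw [hh]; abel⟩

theorem Hom.exists_homotopy (φ ψ : F₁.Hom F₂) :
    ∃ h : ∀ i, (F₁.B i →₀ R) →ₗ[R] (F₂.B (i + 1) →₀ R),
      φ.f 0 = ψ.f 0 + F₂.d 0 ∘ₗ h 0 ∧
      ∀ i, φ.f (i + 1) = ψ.f (i + 1) + (F₂.d (i + 1) ∘ₗ h (i + 1) + h i ∘ₗ F₁.d i) := by
  obtain ⟨h, h₀, hh⟩ := exists_nullHomotopy (fun i => φ.f i - ψ.f i)
    (by rw [comp_sub, φ.comm0, ψ.comm0]; abel) (fun i => by rw [comp_sub, sub_comp, φ.comm, ψ.comm])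
  exact ⟨h, by rw [← h₀]; abel, fun i => by rw [← hh]; abel⟩

end FreeRes

section BaseChange

variable {S S' : Type*} [CommRing S] [CommRing S'] (ρ : S →+* S') {A B : Type*}
  {M M' : Type*} [AddCommGroup M] [Module S M] [AddCommGroup M'] [Module S' M']

open LinearMap

noncomputable def Finsupp.mapRange.semilinearMap : (A →₀ S) →ₛₗ[ρ] (A →₀ S') where
  toFun := Finsupp.mapRange ρ ρ.map_zero
  map_add' := Finsupp.mapRange_add (map_add ρ)
  map_smul' r x := by ext; simp

@[simp]
theorem Finsupp.mapRange.semilinearMap_apply (x : A →₀ S) (a : A) :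
    Finsupp.mapRange.semilinearMap ρ x a = ρ (x a) := rfl

@[simp]
theorem Finsupp.mapRange.semilinearMap_single (a : A) (s : S) :
    Finsupp.mapRange.semilinearMap ρ (Finsupp.single a s) = Finsupp.single a (ρ s) :=
  Finsupp.mapRange_single (hf := ρ.map_zero)

theorem Finsupp.mapRange.semilinearMap_surjective (hρ : Function.Surjective ρ) :
    Function.Surjective (Finsupp.mapRange.semilinearMap ρ : (A →₀ S) → (A →₀ S')) :=
  Finsupp.mapRange_surjective ρ ρ.map_zero hρ

theorem Finsupp.ker_mapRange_semilinearMap :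
    ker (Finsupp.mapRange.semilinearMap ρ : (A →₀ S) →ₛₗ[ρ] (A →₀ S')) = RingHom.ker ρ • ⊤ := by
  ext x
  simp [Finsupp.mem_ideal_smul_top_iff, Finsupp.ext_iff]

theorem RingHom.ker_toSemilinearMap : LinearMap.ker ρ.toSemilinearMap = RingHom.ker ρ • ⊤ := by
  rw [Ideal.smul_top_self]; rfl

variable {ρ}

/-- The base change `f ⊗_S S'`; for `φ = mapRange ρ` its matrix is that of `f` with `ρ` applied
to every entry. -/
noncomputable def freeBaseChange (φ : M →ₛₗ[ρ] M') (f : (A →₀ S) →ₗ[S] M) :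
    (A →₀ S') →ₗ[S'] M' :=
  Finsupp.linearCombination S' fun a => φ (f (Finsupp.single a 1))

theorem freeBaseChange_mapRange (φ : M →ₛₗ[ρ] M') (f : (A →₀ S) →ₗ[S] M) (x : A →₀ S) :
    freeBaseChange φ f (Finsupp.mapRange.semilinearMap ρ x) = φ (f x) := by
  induction x using Finsupp.induction_linear with
  | zero => simp
  | add x y hx hy => simp only [map_add, hx, hy]
  | single a s =>
    rw [← mul_one s, ← smul_eq_mul, ← Finsupp.smul_single, map_smulₛₗ, map_smul, map_smul,
      map_smulₛₗ]
    simp [freeBaseChange]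

theorem freeBaseChange_comp (φ : M →ₛₗ[ρ] M') (g : (B →₀ S) →ₗ[S] M)
    (f : (A →₀ S) →ₗ[S] (B →₀ S)) :
    freeBaseChange φ g ∘ₗ freeBaseChange (Finsupp.mapRange.semilinearMap ρ) f =
      freeBaseChange φ (g ∘ₗ f) :=
  Finsupp.lhom_ext' fun a => ext_ring (by
    simpa [freeBaseChange] using freeBaseChange_mapRange φ g (f (Finsupp.single a 1)))

theorem freeBaseChange_add (φ : M →ₛₗ[ρ] M') (f g : (A →₀ S) →ₗ[S] M) :
    freeBaseChange φ (f + g) = freeBaseChange φ f + freeBaseChange φ g :=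
  Finsupp.lhom_ext' fun a => ext_ring (by simp [freeBaseChange])

theorem freeBaseChange_id :
    freeBaseChange (Finsupp.mapRange.semilinearMap ρ) (LinearMap.id : (A →₀ S) →ₗ[S] _) =
      LinearMap.id :=
  Finsupp.lhom_ext' fun a => ext_ring (by simp [freeBaseChange])

theorem freeBaseChange_eq_zero {φ : M →ₛₗ[ρ] M'} {f : (A →₀ S) →ₗ[S] M}
    (h : ∀ a, φ (f (Finsupp.single a 1)) = 0) : freeBaseChange φ f = 0 :=
  Finsupp.lhom_ext' fun a => ext_ring (by simp [freeBaseChange, h])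

theorem range_freeBaseChange_toSemilinearMap (f : (A →₀ S) →ₗ[S] S) :
    range (freeBaseChange ρ.toSemilinearMap f) = Ideal.map ρ (range f) := by
  have hf : range f = Ideal.span (Set.range fun a => f (Finsupp.single a 1)) := by
    conv_lhs => rw [show f = Finsupp.linearCombination S fun a => f (Finsupp.single a 1) from
      Finsupp.lhom_ext' fun a => ext_ring (by simp)]
    exact Finsupp.range_linearCombination _
  rw [freeBaseChange, Finsupp.range_linearCombination, hf, Ideal.map_span, ← Set.range_comp]
  rfl

theorem ker_freeBaseChange_eq_range (hρ : Function.Surjective ρ) {φ : M →ₛₗ[ρ] M'}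
    (hφ : ker φ = RingHom.ker ρ • ⊤) {g : (B →₀ S) →ₗ[S] M} {f : (A →₀ S) →ₗ[S] (B →₀ S)}
    (hgf : g ∘ₗ f = 0) (h : (RingHom.ker ρ • ⊤ : Submodule S M).comap g ≤
      range f ⊔ RingHom.ker ρ • ⊤) :
    ker (freeBaseChange φ g) = range (freeBaseChange (Finsupp.mapRange.semilinearMap ρ) f) := by
  refine le_antisymm (fun v hv => ?_) ?_
  · obtain ⟨x, rfl⟩ := Finsupp.mapRange.semilinearMap_surjective ρ hρ v
    rw [mem_ker, freeBaseChange_mapRange, ← mem_ker, hφ] at hv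
    obtain ⟨_, ⟨w, rfl⟩, k, hk, rfl⟩ := Submodule.mem_sup.1 (h hv)
    rw [← Finsupp.ker_mapRange_semilinearMap, mem_ker] at hk
    exact ⟨Finsupp.mapRange.semilinearMap ρ w, by rw [freeBaseChange_mapRange, map_add, hk,
      add_zero]⟩
  · rw [range_le_ker_iff, freeBaseChange_comp, hgf]
    exact freeBaseChange_eq_zero fun _ => by simp

end BaseChange

namespace FreeRes

variable {R : Type*} [CommRing R] {I : Ideal R}

open LinearMap

/-- `F ⊗ R/J` is exact in positive homological degrees, i.e. `Tor_i^R(R/I, R/J) = 0` for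
`i ≥ 1`. -/
def ExactMod (F : FreeRes R I) (J : Ideal R) : Prop :=
  (J • ⊤ : Submodule R R).comap F.d0 ≤ range (F.d 0) ⊔ J • ⊤ ∧
    ∀ i, (J • ⊤ : Submodule R (F.B i →₀ R)).comap (F.d i) ≤ range (F.d (i + 1)) ⊔ J • ⊤

theorem exactMod_bot (F : FreeRes R I) : F.ExactMod ⊥ := by
  refine ⟨?_, fun i => ?_⟩ <;>
  · rw [Submodule.bot_smul, Submodule.comap_bot, Submodule.bot_smul, sup_bot_eq]
    first | exact F.exact0.le | exact (F.exactd i).le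

theorem ExactMod.sup_span_singleton {F : FreeRes R I} {J : Ideal R} (hF : F.ExactMod J) {y : R}
    (hJ : ∀ r, y * r ∈ J → r ∈ J) (hIJ : ∀ r, y * r ∈ I ⊔ J → r ∈ I ⊔ J) :
    F.ExactMod (J ⊔ Ideal.span {y}) := by
  have hR (r : R) : y • r ∈ J • (⊤ : Submodule R R) → r ∈ J • (⊤ : Submodule R R) := by
    rw [Ideal.smul_top_self, smul_eq_mul]
    exact hJ r
  have hfree {ι : Type} (x : ι →₀ R) :
      y • x ∈ J • (⊤ : Submodule R (ι →₀ R)) → x ∈ J • (⊤ : Submodule R (ι →₀ R)) := by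
    simpa only [Finsupp.mem_ideal_smul_top_iff, Finsupp.smul_apply, smul_eq_mul] using
      fun h i => hJ _ (h i)
  refine ⟨comap_smul_top_sup_span_le (fun n hn => ?_) hF.1,
    fun i => comap_smul_top_sup_span_le (fun n hn => ?_) (hF.2 i)⟩
  · rw [F.range_d0, Ideal.smul_top_self] at hn ⊢
    exact hIJ n hn
  · cases i with
    | zero => exact mem_range_sup_smul_top_of_smul_mem F.d0_comp_d hR hF.1 hn
    | succ i => exact mem_range_sup_smul_top_of_smul_mem (F.d_comp_d i) hfree (hF.2 i) hn

noncomputable def baseChange (F : FreeRes R I) {R' : Type*} [CommRing R'] (ρ : R →+* R')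
    (hρ : Function.Surjective ρ) (hF : F.ExactMod (RingHom.ker ρ)) {I' : Ideal R'}
    (hI : I.map ρ = I') : FreeRes R' I' where
  B := F.B
  d0 := freeBaseChange ρ.toSemilinearMap F.d0
  d i := freeBaseChange (Finsupp.mapRange.semilinearMap ρ) (F.d i)
  range_d0 := by rw [range_freeBaseChange_toSemilinearMap, F.range_d0, hI]
  exact0 := ker_freeBaseChange_eq_range hρ (RingHom.ker_toSemilinearMap ρ) F.d0_comp_d hF.1
  exactd i := ker_freeBaseChange_eq_range hρ (Finsupp.ker_mapRange_semilinearMap ρ)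
    (F.d_comp_d i) (hF.2 i)

theorem card_le_of_minimal {K : Type*} [Field K] (F₁ F₂ : FreeRes R I) (ρ : R →+* K)
    (hmin : ∀ i b b', ρ (F₁.d i (Finsupp.single b 1) b') = 0) (i : ℕ) [Finite (F₁.B i)]
    [Finite (F₂.B i)] : Nat.card (F₁.B i) ≤ Nat.card (F₂.B i) := by
  obtain ⟨α⟩ := Hom.nonempty F₁ F₂
  obtain ⟨β⟩ := Hom.nonempty F₂ F₁
  -- `β ∘ α` is homotopic to the identity, and the homotopy dies modulo `ker ρ` by minimality.
  obtain ⟨h, h₀, hh⟩ := (β.comp α).exists_homotopy (Hom.id F₁)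
  have hd (j : ℕ) : freeBaseChange (Finsupp.mapRange.semilinearMap ρ) (F₁.d j) = 0 :=
    freeBaseChange_eq_zero fun b => by ext b'; simp [hmin]
  have hid : freeBaseChange (Finsupp.mapRange.semilinearMap ρ) (β.f i) ∘ₗ
      freeBaseChange (Finsupp.mapRange.semilinearMap ρ) (α.f i) = LinearMap.id := by
    rw [freeBaseChange_comp]
    cases i with
    | zero =>
      rw [show β.f 0 ∘ₗ α.f 0 = _ from h₀, freeBaseChange_add, ← freeBaseChange_comp, hd,
        zero_comp, add_zero]
      exact freeBaseChange_id
    | succ i =>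
      rw [show β.f (i + 1) ∘ₗ α.f (i + 1) = _ from hh i, freeBaseChange_add, freeBaseChange_add,
        ← freeBaseChange_comp, ← freeBaseChange_comp (g := h i), hd, hd, zero_comp, comp_zero,
        add_zero, add_zero]
      exact freeBaseChange_id
  have := Fintype.ofFinite (F₁.B i)
  have := Fintype.ofFinite (F₂.B i)
  have hinj : Function.Injective (freeBaseChange (Finsupp.mapRange.semilinearMap ρ) (α.f i)) :=
    Function.LeftInverse.injective (g := freeBaseChange _ (β.f i)) (LinearMap.congr_fun hid)
  simpa [Nat.card_eq_fintype_card, Module.finrank_finsupp_self] using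
    LinearMap.finrank_le_finrank_of_injective hinj

end FreeRes

section SubOne

variable {K : Type} [Field K] {σ : Type}

theorem IsMonomialIdeal.mem_of_X_sub_one_mul_mem {I : Ideal (MvPolynomial σ K)}
    (hI : IsMonomialIdeal I) (v : σ) {f : MvPolynomial σ K} (h : (X v - 1) * f ∈ I) : f ∈ I := by
  classical
  obtain ⟨A, rfl⟩ := hI
  rw [mem_ideal_span_monomial_image] at h ⊢
  have hcoeff (m : σ →₀ ℕ) (hA : ∀ a ∈ A, ¬a ≤ m) :
      coeff (m - Finsupp.single v 1) f * (if v ∈ m.support then 1 else 0) = coeff m f := by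
    have := notMem_support_iff.1 fun hm => let ⟨a, ha, hle⟩ := h m hm; hA a ha hle
    rw [sub_mul, coeff_sub, coeff_X_mul', one_mul, sub_eq_zero] at this
    split_ifs at this ⊢ <;> simpa using this
  -- For `m` outside `I`, `coeff m f = coeff (m - eᵥ) f`: descend on the exponent of `v`.
  have key (n : ℕ) : ∀ m : σ →₀ ℕ, m v = n → (∀ a ∈ A, ¬a ≤ m) → coeff m f = 0 := by
    induction n with
    | zero => intro m hm hA; simpa [hm] using (hcoeff m hA).symm
    | succ n ih =>
      intro m hm hA
      rw [← hcoeff m hA, ih _ (by simp [hm]) fun a ha hle => hA a ha (hle.trans tsub_le_self),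
        zero_mul]
  intro m hm
  by_contra! hA
  exact mem_support_iff.1 hm (key _ m rfl hA)

variable (K) in
noncomputable def subOneIdeal (W : Set σ) : Ideal (MvPolynomial σ K) :=
  Ideal.span ((fun v => X v - 1) '' W)

theorem subOneIdeal_empty : subOneIdeal K (∅ : Set σ) = ⊥ := by
  rw [subOneIdeal, Set.image_empty, Ideal.span_empty]

theorem subOneIdeal_insert (v : σ) (W : Set σ) :
    subOneIdeal K (insert v W) = subOneIdeal K W ⊔ Ideal.span {X v - 1} := by
  rw [subOneIdeal, Set.image_insert_eq, Ideal.span_insert, sup_comm]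
  rfl

open Classical in
noncomputable def evalOneOn (W : Set σ) : MvPolynomial σ K →ₐ[K] MvPolynomial σ K :=
  aeval fun u => if u ∈ W then 1 else X u

theorem evalOneOn_X_of_notMem {W : Set σ} {v : σ} (hv : v ∉ W) :
    evalOneOn W (X v : MvPolynomial σ K) = X v := by
  simp [evalOneOn, hv]

theorem sub_evalOneOn_mem (W : Set σ) (f : MvPolynomial σ K) :
    f - evalOneOn W f ∈ subOneIdeal K W := by
  have : (Ideal.Quotient.mkₐ K (subOneIdeal K W)).comp (evalOneOn W) =
      Ideal.Quotient.mkₐ K (subOneIdeal K W) := algHom_ext fun v => by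
    by_cases hv : v ∈ W
    · rw [AlgHom.comp_apply, evalOneOn, aeval_X, if_pos hv, map_one, Ideal.Quotient.mkₐ_eq_mk,
        ← map_one (Ideal.Quotient.mk _), Ideal.Quotient.eq, ← neg_sub]
      exact neg_mem (Ideal.subset_span ⟨v, hv, rfl⟩)
    · simp [evalOneOn, hv]
  exact Ideal.Quotient.eq.1 (AlgHom.congr_fun this f).symm

theorem subOneIdeal_le_ker (W : Set σ) : subOneIdeal K W ≤ RingHom.ker (evalOneOn (K := K) W) :=
  Ideal.span_le.2 <| by rintro _ ⟨v, hv, rfl⟩; simp [evalOneOn, hv]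

theorem ker_evalOneOn (W : Set σ) : RingHom.ker (evalOneOn (K := K) W) = subOneIdeal K W :=
  le_antisymm (fun f hf => by simpa [RingHom.mem_ker.1 hf] using sub_evalOneOn_mem W f)
    (subOneIdeal_le_ker W)

open scoped Classical in
theorem evalOneOn_monomial (W : Set σ) (m : σ →₀ ℕ) :
    evalOneOn W (monomial m (1 : K)) = monomial (m.filter (· ∉ W)) 1 := by
  rw [evalOneOn, aeval_monomial, monomial_eq, map_one, C_1, one_mul, one_mul, Finsupp.prod,
    Finsupp.prod_filter_index, Finsupp.support_filter, Finset.prod_filter]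
  refine Finset.prod_congr rfl fun x _ => ?_
  by_cases hx : x ∈ W <;> simp [hx]

theorem IsMonomialIdeal.map_evalOneOn {I : Ideal (MvPolynomial σ K)} (hI : IsMonomialIdeal I)
    (W : Set σ) : IsMonomialIdeal (I.map (evalOneOn W)) := by
  obtain ⟨A, rfl⟩ := hI
  classical
  refine ⟨(fun m => m.filter (· ∉ W)) '' A, ?_⟩
  rw [Ideal.map_span, Set.image_image, Set.image_image]
  simp only [evalOneOn_monomial]

theorem IsMonomialIdeal.mem_sup_subOneIdeal {I : Ideal (MvPolynomial σ K)}
    (hI : IsMonomialIdeal I) {W : Set σ} {v : σ} (hv : v ∉ W) {f : MvPolynomial σ K}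
    (h : (X v - 1) * f ∈ I ⊔ subOneIdeal K W) : f ∈ I ⊔ subOneIdeal K W := by
  -- Setting the variables in `W` to `1` reduces this to the monomial ideal `I.map (evalOneOn W)`.
  have hmap : I.map (evalOneOn W) ≤ I ⊔ subOneIdeal K W :=
    Ideal.map_le_iff_le_comap.2 fun g hg => by
      rw [Ideal.mem_comap, ← sub_sub_cancel g (evalOneOn W g)]
      exact sub_mem (Ideal.mem_sup_left hg) (Ideal.mem_sup_right (sub_evalOneOn_mem W g))
  have hJ : (subOneIdeal K W).map (evalOneOn W) = ⊥ :=
    (Ideal.map_eq_bot_iff_le_ker _).2 (subOneIdeal_le_ker W)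
  have h' : (X v - 1) * evalOneOn W f ∈ I.map (evalOneOn W) := by
    simpa [Ideal.map_sup, hJ, evalOneOn_X_of_notMem hv] using Ideal.mem_map_of_mem (evalOneOn W) h
  rw [← sub_add_cancel f (evalOneOn W f)]
  exact add_mem (Ideal.mem_sup_right (sub_evalOneOn_mem W f))
    (hmap ((hI.map_evalOneOn W).mem_of_X_sub_one_mul_mem v h'))

theorem FreeRes.exactMod_subOneIdeal {I : Ideal (MvPolynomial σ K)} (hI : IsMonomialIdeal I)
    (F : FreeRes (MvPolynomial σ K) I) {W : Set σ} (hW : W.Finite) :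
    F.ExactMod (subOneIdeal K W) := by
  have hbot : IsMonomialIdeal (⊥ : Ideal (MvPolynomial σ K)) := ⟨∅, by simp⟩
  induction W, hW using Set.Finite.induction_on with
  | empty => simpa [subOneIdeal_empty] using F.exactMod_bot
  | insert hv _ ih =>
    rw [subOneIdeal_insert]
    exact ih.sup_span_singleton (fun r hr => by simpa using hbot.mem_sup_subOneIdeal hv (by simpa))
      fun r => hI.mem_sup_subOneIdeal hv

end SubOne

section Restriction

variable {K σ τ : Type} [Field K] {e : τ → σ}

-- Like `MvPolynomial.killCompl`, but the variables outside the range of `e` are sent to `1`.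
variable (K) in
noncomputable def killComplOne (e : τ → σ) : MvPolynomial σ K →ₐ[K] MvPolynomial τ K :=
  aeval (Function.extend e X 1)

theorem killComplOne_X_apply (he : Function.Injective e) (t : τ) :
    killComplOne K e (X (e t)) = X t := by
  simp [killComplOne, he.extend_apply]

theorem killComplOne_X_of_notMem {v : σ} (hv : v ∉ Set.range e) :
    killComplOne K e (X v) = 1 := by
  simp [killComplOne, Function.extend_apply' _ _ _ hv]

theorem killComplOne_rename (he : Function.Injective e) (f : MvPolynomial τ K) :
    killComplOne K e (rename e f) = f := by
  have : (killComplOne K e).comp (rename e) = AlgHom.id K _ :=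
    algHom_ext fun t => by simp [killComplOne_X_apply he]
  exact AlgHom.congr_fun this f

theorem killComplOne_surjective (he : Function.Injective e) :
    Function.Surjective (killComplOne K e) :=
  fun f => ⟨rename e f, killComplOne_rename he f⟩

theorem rename_comp_killComplOne (he : Function.Injective e) :
    (rename e).comp (killComplOne K e) = evalOneOn (Set.range e)ᶜ := algHom_ext fun v => by
  by_cases hv : v ∈ Set.range e
  · obtain ⟨t, rfl⟩ := hv
    simp [killComplOne_X_apply he, evalOneOn]
  · simp [killComplOne_X_of_notMem hv, evalOneOn, hv]

theorem ker_killComplOne (he : Function.Injective e) :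
    RingHom.ker (killComplOne K e) = subOneIdeal K (Set.range e)ᶜ := by
  ext f
  rw [← ker_evalOneOn, RingHom.mem_ker, RingHom.mem_ker, ← rename_comp_killComplOne he,
    AlgHom.comp_apply, map_eq_zero_iff _ (rename_injective e he)]

end Restriction

section LPQ

variable {K : Type} [Field K] {P Q : Type} [PartialOrder P] [PartialOrder Q] [Fintype P]

theorem isMonomialIdeal_LPQ : IsMonomialIdeal (LPQ K P Q) := by
  refine ⟨Set.range fun φ : P →o Q => ∑ p, Finsupp.single (p, φ p) 1, ?_⟩
  rw [LPQ, ← Set.range_comp]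
  congr 1
  ext φ
  simp [monomial_sum_one, X]

theorem map_killComplOne_LPQ (P' : Finset P)
    (hext : ∀ φ : ↥P' →o Q, ∃ Φ : P →o Q, ∀ p : ↥P', Φ ↑p = φ p) :
    (LPQ K P Q).map (killComplOne K (Prod.map Subtype.val id : ↥P' × Q → P × Q)) =
      LPQ K ↥P' Q := by
  have he : Function.Injective (Prod.map Subtype.val id : ↥P' × Q → P × Q) :=
    Subtype.val_injective.prodMap Function.injective_id
  have hu (Φ : P →o Q) : killComplOne K (Prod.map Subtype.val id) (∏ p, X (p, Φ p)) =
      ∏ p : ↥P', (X (p, Φ p) : MvPolynomial (↥P' × Q) K) := by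
    rw [map_prod, ← Finset.prod_subset (Finset.subset_univ P') fun p _ hp =>
      killComplOne_X_of_notMem ?_, ← Finset.prod_coe_sort P']
    · exact Finset.prod_congr rfl fun p _ => killComplOne_X_apply he (p, Φ p)
    · rintro ⟨⟨q, q'⟩, hq⟩
      exact hp (by simp only [Prod.map, Prod.mk.injEq] at hq; exact hq.1 ▸ q.2)
  rw [LPQ, LPQ, Ideal.map_span, ← Set.range_comp]
  congr 1
  ext u
  constructor
  · rintro ⟨Φ, rfl⟩
    exact ⟨Φ.comp (OrderHom.Subtype.val _), (hu Φ).symm⟩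
  · rintro ⟨φ, rfl⟩
    obtain ⟨Φ, hΦ⟩ := hext φ
    exact ⟨Φ, by simp only [Function.comp_apply, hu, hΦ]⟩

end LPQ

/-- Restricting the source poset: if every order-preserving map
`P' → Q` extends to `P`, then the total Betti numbers can only drop. -/
theorem stmt_7 (K : Type) [Field K] (P Q : Type) [PartialOrder P] [PartialOrder Q]
    [Fintype P] [Fintype Q] (P' : Finset P)
    (hext : ∀ φ : ↥P' →o Q, ∃ Φ : P →o Q, ∀ p : ↥P', Φ ↑p = φ p) :
    ∀ (F : MGMinRes (LPQ K P Q)) (F' : MGMinRes (LPQ K ↥P' Q)) (i : ℕ),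
      F'.betaT i ≤ F.betaT i := by
  intro F F' i
  cases i with
  | zero => exact le_rfl
  | succ i =>
    let e : ↥P' × Q → P × Q := Prod.map Subtype.val id
    have he : Function.Injective e := Subtype.val_injective.prodMap Function.injective_id
    have hker : RingHom.ker (killComplOne K e).toRingHom = subOneIdeal K (Set.range e)ᶜ :=
      ker_killComplOne he
    have hexact : F.toFreeRes.ExactMod (RingHom.ker (killComplOne K e).toRingHom) := by
      rw [hker]
      exact F.toFreeRes.exactMod_subOneIdeal isMonomialIdeal_LPQ (Set.toFinite _)
    let G := F.toFreeRes.baseChange _ (killComplOne_surjective he) hexact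
      (map_killComplOne_LPQ P' hext)
    have : Fintype (F'.toFreeRes.B i) := F'.finB i
    have : Fintype (G.B i) := F.finB i
    exact F'.toFreeRes.card_le_of_minimal G constantCoeff F'.min_d i
end
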